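/- arXiv:2303.10771 — 8 statements merged into one kernel-verified Lean document; each statement's English description precedes it below -/
import Mathlib

section
/- Let U be a real Hilbert space, W ⊆ U a closed subspace with orthogonal projection P_W, and M ⊆ U a nonempty subset. Let δ₀ ≥ 0 and μ ≥ 0 be constants such that for every σ ≥ 0, every w ∈ W, and all x, y with P_W x = P_W y = w, infDist(x, M) ≤ σ and infDist(y, M) ≤ σ, one has ‖x − y‖ ≤ δ₀ + 2σμ. Let N ≥ 1, let A_1, …, A_N : W → U satisfy P_W(A_k(w)) = w for all w ∈ W and all k, and let S : U → ℝ satisfy c·infDist(v, M) ≤ S(v) ≤ C·infDist(v, M) for all v ∈ U, with constants 0 < c ≤ C. Then for every u ∈ M, with w := P_W u, and every k* ∈ {1, …, N} minimizing k ↦ S(A_k(w)), one has ‖u − A_{k*}(w)‖ ≤ δ₀ + 2(C/c)·μ · min_{1 ≤ k ≤ N} ‖u − A_k(w)‖. -/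
/-!
Both `u` and the selected estimate `A k* w` lie in the fibre `U_w`. The surrogate comparison
puts `A k* w` within `(C / c) · min_k ‖u - A_k w‖` of `M`, since `S (A k* w) ≤ S (A_k w)` and
`A_k w` is within `‖u - A_k w‖` of `u ∈ M`; the stability bound at that `σ` concludes.
-/

open Metric

section SurrogateMinimizer

variable {X ι : Type*} [PseudoMetricSpace X] {M : Set X} {S : X → ℝ} {c C : ℝ}

theorem mul_infDist_le_of_surrogate_le (hC : 0 ≤ C)
    (hlow : ∀ v, c * infDist v M ≤ S v) (hup : ∀ v, S v ≤ C * infDist v M)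
    {u x y : X} (hu : u ∈ M) (hxy : S x ≤ S y) :
    c * infDist x M ≤ C * dist u y :=
  calc c * infDist x M ≤ S x := hlow x
    _ ≤ S y := hxy
    _ ≤ C * infDist y M := hup y
    _ ≤ C * dist u y := by
      rw [dist_comm]
      exact mul_le_mul_of_nonneg_left (infDist_le_dist_of_mem hu) hC

theorem infDist_le_mul_iInf_dist_of_surrogate_min (hc : 0 < c) (hcC : c ≤ C)
    (hlow : ∀ v, c * infDist v M ≤ S v) (hup : ∀ v, S v ≤ C * infDist v M)
    {u : X} (hu : u ∈ M) (v : ι → X) {i : ι} (hi : ∀ k, S (v i) ≤ S (v k)) :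
    infDist (v i) M ≤ C / c * ⨅ k, dist u (v k) := by
  have : Nonempty ι := ⟨i⟩
  have hCc : 0 ≤ C / c := div_nonneg (hc.le.trans hcC) hc.le
  rw [Real.mul_iInf_of_nonneg hCc]
  refine le_ciInf fun k => ?_
  rw [div_mul_eq_mul_div, le_div_iff₀' hc]
  exact mul_infDist_le_of_surrogate_le (hc.le.trans hcC) hlow hup hu (hi k)

end SurrogateMinimizer

theorem stmt_0_general
    {U : Type*} [NormedAddCommGroup U] [InnerProductSpace ℝ U]
    (W : Submodule ℝ U) [CompleteSpace W]
    (M : Set U)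
    (δ₀ μ : ℝ)
    (hstab : ∀ σ : ℝ, 0 ≤ σ → ∀ w : W, ∀ x y : U,
      W.orthogonalProjection x = w → W.orthogonalProjection y = w →
      Metric.infDist x M ≤ σ → Metric.infDist y M ≤ σ →
      ‖x - y‖ ≤ δ₀ + 2 * σ * μ)
    (N : ℕ)
    (A : Fin N → W → U)
    (hA : ∀ (k : Fin N) (w : W), W.orthogonalProjection (A k w) = w)
    (S : U → ℝ) (c C : ℝ) (hc : 0 < c) (hcC : c ≤ C)
    (hS : ∀ v : U, c * Metric.infDist v M ≤ S v ∧ S v ≤ C * Metric.infDist v M)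
    (u : U) (hu : u ∈ M)
    (kstar : Fin N)
    (hkstar : ∀ k : Fin N,
      S (A kstar (W.orthogonalProjection u)) ≤ S (A k (W.orthogonalProjection u))) :
    ‖u - A kstar (W.orthogonalProjection u)‖ ≤
      δ₀ + 2 * (C / c) * μ * ⨅ k : Fin N, ‖u - A k (W.orthogonalProjection u)‖ := by
  set w := W.orthogonalProjection u
  set σ := C / c * ⨅ k, ‖u - A k w‖
  have hstar : infDist (A kstar w) M ≤ σ := by
    simpa only [dist_eq_norm] using infDist_le_mul_iInf_dist_of_surrogate_min hc hcC
      (fun v => (hS v).1) (fun v => (hS v).2) hu (fun k => A k w) hkstar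
  have hσ : 0 ≤ σ := infDist_nonneg.trans hstar
  have hu_σ : infDist u M ≤ σ := by rwa [infDist_zero_of_mem hu]
  calc ‖u - A kstar w‖ ≤ δ₀ + 2 * σ * μ := hstab σ hσ w u _ rfl (hA kstar w) hu_σ hstar
    _ = δ₀ + 2 * (C / c) * μ * ⨅ k, ‖u - A k w‖ := by ring

/-- General multi-space oracle bound (Proposition 3.1). -/
theorem stmt_0
    {U : Type*} [NormedAddCommGroup U] [InnerProductSpace ℝ U] [CompleteSpace U]
    (W : Submodule ℝ U) [CompleteSpace W]
    (M : Set U) (hM : M.Nonempty)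
    (δ₀ μ : ℝ) (hδ₀ : 0 ≤ δ₀) (hμ : 0 ≤ μ)
    (hstab : ∀ σ : ℝ, 0 ≤ σ → ∀ w : W, ∀ x y : U,
      W.orthogonalProjection x = w → W.orthogonalProjection y = w →
      Metric.infDist x M ≤ σ → Metric.infDist y M ≤ σ →
      ‖x - y‖ ≤ δ₀ + 2 * σ * μ)
    (N : ℕ) (hN : 1 ≤ N)
    (A : Fin N → W → U)
    (hA : ∀ (k : Fin N) (w : W), W.orthogonalProjection (A k w) = w)
    (S : U → ℝ) (c C : ℝ) (hc : 0 < c) (hcC : c ≤ C)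
    (hS : ∀ v : U, c * Metric.infDist v M ≤ S v ∧ S v ≤ C * Metric.infDist v M)
    (u : U) (hu : u ∈ M)
    (kstar : Fin N)
    (hkstar : ∀ k : Fin N,
      S (A kstar (W.orthogonalProjection u)) ≤ S (A k (W.orthogonalProjection u))) :
    ‖u - A kstar (W.orthogonalProjection u)‖ ≤
      δ₀ + 2 * (C / c) * μ * ⨅ k : Fin N, ‖u - A k (W.orthogonalProjection u)‖ :=
  stmt_0_general W M δ₀ μ hstab N A hA S c C hc hcC hS u hu kstar hkstar
end

section
/- Let (Ω, ℙ) be a probability space, H a real Hilbert space, k ∈ ℕ, ε ∈ [0, 1), δ > 0, and let Θ : Ω → (H →L[ℝ] ℝ^k) be a random continuous linear map. Let P be a nonempty parameter set, let B_0, B_1, …, B_{m_B} : H →L[ℝ] H be continuous linear operators, let f_0, f_1, …, f_{m_f} ∈ H, and let θ^B_q : P → ℝ (1 ≤ q ≤ m_B) and θ^f_q : P → ℝ (1 ≤ q ≤ m_f) be coefficient functions. Define B(ξ) := B_0 + Σ_{q=1}^{m_B} θ^B_q(ξ) B_q, f(ξ) := f_0 + Σ_{q=1}^{m_f} θ^f_q(ξ)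 f_q, and the residual r(v, ξ) := B(ξ)v − f(ξ). Assume that for every subspace Y ⊆ H of dimension at most m_B + m_f + 1, the event {ω : ∀ y ∈ Y, |‖Θ_ω y‖² − ‖y‖²| ≤ ε‖y‖²} is measurable with probability at least 1 − δ. Then for each fixed v ∈ H, with probability at least 1 − δ one has √(1 − ε) · inf_{ξ ∈ P} ‖r(v, ξ)‖ ≤ inf_{ξ ∈ P} ‖Θ_ω r(v, ξ)‖ ≤ √(1 + ε) · inf_{ξ ∈ P} ‖r(v, ξ)‖. -/
open MeasureTheory

/-- Sketched surrogate distance under affine parametrization (Proposition 4.2). -/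
theorem stmt_3
    {Ω : Type*} [MeasurableSpace Ω] (ℙ : Measure Ω) [IsProbabilityMeasure ℙ]
    {H : Type*} [NormedAddCommGroup H] [InnerProductSpace ℝ H] [CompleteSpace H]
    (k : ℕ) (ε δ : ℝ) (hε0 : 0 ≤ ε) (hε1 : ε < 1) (hδ : 0 < δ)
    (Θ : Ω → (H →L[ℝ] EuclideanSpace ℝ (Fin k)))
    (P : Type*) [Nonempty P]
    (mB mf : ℕ)
    (B0 : H →L[ℝ] H) (B : Fin mB → (H →L[ℝ] H))
    (f0 : H) (f : Fin mf → H)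
    (θB : Fin mB → P → ℝ) (θf : Fin mf → P → ℝ)
    (hemb : ∀ Y : Submodule ℝ H, Module.rank ℝ Y ≤ (mB + mf + 1 : ℕ) →
      MeasurableSet {ω : Ω | ∀ y ∈ Y, |‖Θ ω y‖ ^ 2 - ‖y‖ ^ 2| ≤ ε * ‖y‖ ^ 2} ∧
      ENNReal.ofReal (1 - δ) ≤
        ℙ {ω : Ω | ∀ y ∈ Y, |‖Θ ω y‖ ^ 2 - ‖y‖ ^ 2| ≤ ε * ‖y‖ ^ 2})
    (v : H) :
    ENNReal.ofReal (1 - δ) ≤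
      ℙ {ω : Ω |
        Real.sqrt (1 - ε) *
            (⨅ ξ : P, ‖(B0 + ∑ q, θB q ξ • B q) v - (f0 + ∑ q, θf q ξ • f q)‖) ≤
          (⨅ ξ : P, ‖Θ ω ((B0 + ∑ q, θB q ξ • B q) v - (f0 + ∑ q, θf q ξ • f q))‖) ∧
        (⨅ ξ : P, ‖Θ ω ((B0 + ∑ q, θB q ξ • B q) v - (f0 + ∑ q, θf q ξ • f q))‖) ≤
          Real.sqrt (1 + ε) *
            (⨅ ξ : P, ‖(B0 + ∑ q, θB q ξ • B q) v - (f0 + ∑ q, θf q ξ • f q)‖)} := by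
  classical
  set r : P → H := fun ξ => (B0 + ∑ q, θB q ξ • B q) v - (f0 + ∑ q, θf q ξ • f q) with hr
  set g : Fin (mB + mf + 1) → H :=
    Fin.cons (B0 v - f0) (Fin.append (fun q => B q v) f) with hg
  set Y : Submodule ℝ H := Submodule.span ℝ (Set.range g) with hY
  have hrank : Module.rank ℝ Y ≤ (mB + mf + 1 : ℕ) := by
    refine (rank_span_le _).trans ?_
    have h := Cardinal.mk_range_le_lift (f := g)
    have h2 : Cardinal.mk (Set.range g) ≤ (mB + mf + 1 : ℕ) := by simpa using h
    exact_mod_cast h2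
  obtain ⟨hmeas, hP⟩ := hemb Y hrank
  refine hP.trans (measure_mono ?_)
  intro ω hω
  simp only [Set.mem_setOf_eq] at hω ⊢
  have hmem : ∀ ξ, r ξ ∈ Y := by
    intro ξ
    have h0 : B0 v - f0 ∈ Y := Submodule.subset_span ⟨0, by simp [hg]⟩
    have h1 : ∀ q : Fin mB, B q v ∈ Y := fun q =>
      Submodule.subset_span ⟨(Fin.castAdd mf q).succ, by
        simp [hg, Fin.cons_succ, Fin.append_left]⟩
    have h2 : ∀ q : Fin mf, f q ∈ Y := fun q =>
      Submodule.subset_span ⟨(Fin.natAdd mB q).succ, by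
        simp [hg, Fin.cons_succ, Fin.append_right]⟩
    have hre : r ξ = (B0 v - f0) + (∑ q, θB q ξ • B q v) - ∑ q, θf q ξ • f q := by
      simp only [hr, ContinuousLinearMap.add_apply, ContinuousLinearMap.sum_apply,
        ContinuousLinearMap.smul_apply]
      abel
    rw [hre]
    exact Submodule.sub_mem _
      (Submodule.add_mem _ h0 (Submodule.sum_mem _ fun q _ => Submodule.smul_mem _ _ (h1 q)))
      (Submodule.sum_mem _ fun q _ => Submodule.smul_mem _ _ (h2 q))
  have hlow : ∀ ξ, Real.sqrt (1 - ε) * ‖r ξ‖ ≤ ‖Θ ω (r ξ)‖ := by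
    intro ξ
    have h := abs_le.mp (hω (r ξ) (hmem ξ))
    have h1 : (1 - ε) * ‖r ξ‖ ^ 2 ≤ ‖Θ ω (r ξ)‖ ^ 2 := by nlinarith
    calc Real.sqrt (1 - ε) * ‖r ξ‖ = Real.sqrt ((1 - ε) * ‖r ξ‖ ^ 2) := by
          rw [Real.sqrt_mul (by linarith), Real.sqrt_sq (norm_nonneg _)]
      _ ≤ Real.sqrt (‖Θ ω (r ξ)‖ ^ 2) := Real.sqrt_le_sqrt h1
      _ = ‖Θ ω (r ξ)‖ := Real.sqrt_sq (norm_nonneg _)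
  have hhigh : ∀ ξ, ‖Θ ω (r ξ)‖ ≤ Real.sqrt (1 + ε) * ‖r ξ‖ := by
    intro ξ
    have h := abs_le.mp (hω (r ξ) (hmem ξ))
    have h1 : ‖Θ ω (r ξ)‖ ^ 2 ≤ (1 + ε) * ‖r ξ‖ ^ 2 := by nlinarith
    calc ‖Θ ω (r ξ)‖ = Real.sqrt (‖Θ ω (r ξ)‖ ^ 2) := (Real.sqrt_sq (norm_nonneg _)).symm
      _ ≤ Real.sqrt ((1 + ε) * ‖r ξ‖ ^ 2) := Real.sqrt_le_sqrt h1
      _ = Real.sqrt (1 + ε) * ‖r ξ‖ := by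
          rw [Real.sqrt_mul (by linarith), Real.sqrt_sq (norm_nonneg _)]
  have bddr : BddBelow (Set.range fun ξ => ‖r ξ‖) :=
    ⟨0, by rintro x ⟨ξ, rfl⟩; exact norm_nonneg _⟩
  have bddΘ : BddBelow (Set.range fun ξ => ‖Θ ω (r ξ)‖) :=
    ⟨0, by rintro x ⟨ξ, rfl⟩; exact norm_nonneg _⟩
  constructor
  · show Real.sqrt (1 - ε) * (⨅ ξ, ‖r ξ‖) ≤ ⨅ ξ, ‖Θ ω (r ξ)‖
    rw [Real.mul_iInf_of_nonneg (Real.sqrt_nonneg _)]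
    exact ciInf_mono ⟨0, by rintro x ⟨ξ, rfl⟩; positivity⟩ hlow
  · show (⨅ ξ, ‖Θ ω (r ξ)‖) ≤ Real.sqrt (1 + ε) * ⨅ ξ, ‖r ξ‖
    rw [Real.mul_iInf_of_nonneg (Real.sqrt_nonneg _)]
    exact le_ciInf fun ξ => (ciInf_le bddΘ ξ).trans (hhigh ξ)
end

section
/- Let U be a real Hilbert space, W ⊆ U a closed subspace with orthogonal projection P_W, and M ⊆ U a nonempty subset. Let δ₀ ≥ 0 and μ ≥ 0 be constants such that for every σ ≥ 0, every w ∈ W, and all x, y with P_W x = P_W y = w, infDist(x, M) ≤ σ and infDist(y, M) ≤ σ, one has ‖x − y‖ ≤ δ₀ + 2σμ. Let N ≥ 1, let A_1, …, A_N : W → U satisfy P_W(A_k(w)) = w for all w ∈ W and all k, and let S : U → ℝ satisfy c·infDist(v, M) ≤ S(v) ≤ C·infDist(v, M) for all v ∈ U, with 0 < c ≤ C. Fix u ∈ M and set w := P_W u. Let (Ω, ℙ) be a probability space, ε ∈ [0, 1), δ > 0, and let S^Θ : Ω → (U → ℝ) be a random function such that for each k ∈ {1, …, N} the event {ω : √(1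 − ε)·S(A_k(w)) ≤ S^Θ_ω(A_k(w)) ≤ √(1 + ε)·S(A_k(w))} is measurable with probability at least 1 − δ. Then with probability at least 1 − Nδ, every k* ∈ {1, …, N} minimizing k ↦ S^Θ_ω(A_k(w)) satisfies ‖u − A_{k*}(w)‖ ≤ δ₀ + 2κ^Θ μ · min_{1 ≤ k ≤ N} ‖u − A_k(w)‖, where κ^Θ := (C/c)·√(1 + ε)/√(1 − ε). -/
open MeasureTheory Metric

/-!
On the event where the sketch `S^Θ` is a `√(1 ∓ ε)`-accurate copy of `S` at all `N` candidates
`A_k w` (probability at least `1 - Nδ` by the union bound), a minimiser `k*` of `S^Θ` is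
`κ^Θ`-quasi-optimal for the distance to `M`: `infDist (A_{k*} w) M ≤ κ^Θ infDist (A_k w) M
≤ κ^Θ ‖u - A_k w‖` for every `k`. Since `u ∈ M` and `A_{k*} w` lie in the same fibre `w + W^⊥`,
both within `σ := κ^Θ min_k ‖u - A_k w‖` of `M`, the stability hypothesis bounds their distance
by `δ₀ + 2σμ`.
-/

section UnionBound

variable {Ω : Type*} [MeasurableSpace Ω] {ℙ : Measure Ω} [IsProbabilityMeasure ℙ]

lemma prob_compl_le_ofReal_of_ofReal_one_sub_le {E : Set Ω} (hE : MeasurableSet E) {δ : ℝ}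
    (h : ENNReal.ofReal (1 - δ) ≤ ℙ E) : ℙ Eᶜ ≤ ENNReal.ofReal δ := by
  rw [prob_compl_eq_one_sub hE, tsub_le_iff_right]
  calc (1 : ENNReal) = ENNReal.ofReal (δ + (1 - δ)) := by simp
    _ ≤ ENNReal.ofReal δ + ENNReal.ofReal (1 - δ) := ENNReal.ofReal_add_le
    _ ≤ ENNReal.ofReal δ + ℙ E := by gcongr

lemma ofReal_one_sub_card_mul_le_prob_iInter {ι : Type*} [Fintype ι] {E : ι → Set Ω} {δ : ℝ}
    (hδ : 0 ≤ δ) (hE : ∀ i, MeasurableSet (E i)) (h : ∀ i, ENNReal.ofReal (1 - δ) ≤ ℙ (E i)) :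
    ENNReal.ofReal (1 - Fintype.card ι * δ) ≤ ℙ (⋂ i, E i) := by
  have hcompl : ℙ (⋂ i, E i)ᶜ ≤ ENNReal.ofReal (Fintype.card ι * δ) :=
    calc ℙ (⋂ i, E i)ᶜ ≤ ∑ i, ℙ (E i)ᶜ := by
          rw [Set.compl_iInter]; exact measure_iUnion_fintype_le _ _
      _ ≤ ∑ _i : ι, ENNReal.ofReal δ :=
          Finset.sum_le_sum fun i _ => prob_compl_le_ofReal_of_ofReal_one_sub_le (hE i) (h i)
      _ = ENNReal.ofReal (Fintype.card ι * δ) := by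
          rw [ENNReal.ofReal_mul (Nat.cast_nonneg _), ENNReal.ofReal_natCast]; simp
  calc ENNReal.ofReal (1 - Fintype.card ι * δ) = 1 - ENNReal.ofReal (Fintype.card ι * δ) := by
        rw [ENNReal.ofReal_sub _ (by positivity), ENNReal.ofReal_one]
    _ ≤ 1 - ℙ (⋂ i, E i)ᶜ := tsub_le_tsub_left hcompl 1
    _ = ℙ (⋂ i, E i) := by
        rw [prob_compl_eq_one_sub (MeasurableSet.iInter hE), ENNReal.sub_sub_cancel
          ENNReal.one_ne_top prob_le_one]

end UnionBound

lemma infDist_le_mul_of_sketch_le {X : Type*} [PseudoMetricSpace X] {M : Set X}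
    {S SΘ : X → ℝ} {a b c C : ℝ} {v w : X} (ha : 0 < a) (hb : 0 ≤ b) (hc : 0 < c)
    (hSv : c * infDist v M ≤ S v) (hSw : S w ≤ C * infDist w M)
    (hv : a * S v ≤ SΘ v) (hw : SΘ w ≤ b * S w) (hvw : SΘ v ≤ SΘ w) :
    infDist v M ≤ C / c * b / a * infDist w M := by
  have key : a * c * infDist v M ≤ b * C * infDist w M :=
    calc a * c * infDist v M ≤ a * S v := by rw [mul_assoc]; gcongr
      _ ≤ b * S w := hv.trans (hvw.trans hw)
      _ ≤ b * C * infDist w M := by rw [mul_assoc]; gcongr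
  rw [show C / c * b / a * infDist w M = b * C * infDist w M / (a * c) by field_simp,
    le_div_iff₀ (by positivity)]
  linarith

theorem norm_sub_le_of_infDist_le_mul {U : Type*} [NormedAddCommGroup U] [InnerProductSpace ℝ U]
    {W : Submodule ℝ U} [W.HasOrthogonalProjection] {M : Set U} {δ₀ μ : ℝ}
    (hstab : ∀ σ : ℝ, 0 ≤ σ → ∀ w : W, ∀ x y : U,
      Submodule.orthogonalProjectionOnto W x = w → Submodule.orthogonalProjectionOnto W y = w →
      infDist x M ≤ σ → infDist y M ≤ σ → ‖x - y‖ ≤ δ₀ + 2 * σ * μ)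
    {ι : Type*} [Finite ι] {u : U} (hu : u ∈ M) {v : ι → U}
    (hv : ∀ k, Submodule.orthogonalProjectionOnto W (v k) = Submodule.orthogonalProjectionOnto W u)
    {κ : ℝ} (hκ : 0 ≤ κ) {kstar : ι} (hkstar : ∀ k, infDist (v kstar) M ≤ κ * infDist (v k) M) :
    ‖u - v kstar‖ ≤ δ₀ + 2 * κ * μ * ⨅ k, ‖u - v k‖ := by
  have : Nonempty ι := ⟨kstar⟩
  obtain ⟨k₀, hk₀⟩ : ∃ k₀, ‖u - v k₀‖ = ⨅ k, ‖u - v k‖ := exists_eq_ciInf_of_finite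
  have hσ : 0 ≤ κ * ‖u - v k₀‖ := by positivity
  have hu_near : infDist u M ≤ κ * ‖u - v k₀‖ := by rwa [infDist_zero_of_mem hu]
  have hv_near : infDist (v kstar) M ≤ κ * ‖u - v k₀‖ := by
    refine (hkstar k₀).trans (mul_le_mul_of_nonneg_left ?_ hκ)
    simpa only [dist_eq_norm'] using infDist_le_dist_of_mem hu
  calc ‖u - v kstar‖ ≤ δ₀ + 2 * (κ * ‖u - v k₀‖) * μ :=
        hstab _ hσ _ u (v kstar) rfl (hv kstar) hu_near hv_near
    _ = δ₀ + 2 * κ * μ * ⨅ k, ‖u - v k‖ := by rw [← hk₀]; ring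

theorem stmt_6_general
    {U : Type*} [NormedAddCommGroup U] [InnerProductSpace ℝ U]
    (W : Submodule ℝ U) [CompleteSpace W]
    (M : Set U)
    (δ₀ μ : ℝ)
    (hstab : ∀ σ : ℝ, 0 ≤ σ → ∀ w : W, ∀ x y : U,
      Submodule.orthogonalProjectionOnto W x = w → Submodule.orthogonalProjectionOnto W y = w →
      Metric.infDist x M ≤ σ → Metric.infDist y M ≤ σ →
      ‖x - y‖ ≤ δ₀ + 2 * σ * μ)
    (N : ℕ)
    (A : Fin N → W → U)
    (hA : ∀ (k : Fin N) (w : W), Submodule.orthogonalProjectionOnto W (A k w) = w)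
    (S : U → ℝ) (c C : ℝ) (hc : 0 < c) (hcC : c ≤ C)
    (hS : ∀ v : U, c * Metric.infDist v M ≤ S v ∧ S v ≤ C * Metric.infDist v M)
    (u : U) (hu : u ∈ M)
    {Ω : Type*} [MeasurableSpace Ω] (ℙ : Measure Ω) [IsProbabilityMeasure ℙ]
    (ε δ : ℝ) (hε1 : ε < 1) (hδ : 0 < δ)
    (SΘ : Ω → U → ℝ)
    (hmeas : ∀ k : Fin N,
      MeasurableSet {ω : Ω |
        Real.sqrt (1 - ε) * S (A k (Submodule.orthogonalProjectionOnto W u)) ≤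
            SΘ ω (A k (Submodule.orthogonalProjectionOnto W u)) ∧
        SΘ ω (A k (Submodule.orthogonalProjectionOnto W u)) ≤
            Real.sqrt (1 + ε) * S (A k (Submodule.orthogonalProjectionOnto W u))})
    (hprob : ∀ k : Fin N,
      ENNReal.ofReal (1 - δ) ≤
        ℙ {ω : Ω |
          Real.sqrt (1 - ε) * S (A k (Submodule.orthogonalProjectionOnto W u)) ≤
              SΘ ω (A k (Submodule.orthogonalProjectionOnto W u)) ∧
          SΘ ω (A k (Submodule.orthogonalProjectionOnto W u)) ≤
              Real.sqrt (1 + ε) * S (A k (Submodule.orthogonalProjectionOnto W u))}) :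
    ENNReal.ofReal (1 - N * δ) ≤
      ℙ {ω : Ω | ∀ kstar : Fin N,
        (∀ k : Fin N, SΘ ω (A kstar (Submodule.orthogonalProjectionOnto W u)) ≤
            SΘ ω (A k (Submodule.orthogonalProjectionOnto W u))) →
        ‖u - A kstar (Submodule.orthogonalProjectionOnto W u)‖ ≤
          δ₀ + 2 * ((C / c) * Real.sqrt (1 + ε) / Real.sqrt (1 - ε)) * μ *
            ⨅ k : Fin N, ‖u - A k (Submodule.orthogonalProjectionOnto W u)‖} := by
  set w := Submodule.orthogonalProjectionOnto W u
  have hsqrt : 0 < Real.sqrt (1 - ε) := Real.sqrt_pos.2 (by linarith)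
  have hκ : 0 ≤ (C / c) * Real.sqrt (1 + ε) / Real.sqrt (1 - ε) := by
    have : 0 ≤ C := hc.le.trans hcC
    positivity
  refine le_trans ?_ (measure_mono (s := ⋂ k : Fin N, {ω : Ω |
    Real.sqrt (1 - ε) * S (A k w) ≤ SΘ ω (A k w) ∧
      SΘ ω (A k w) ≤ Real.sqrt (1 + ε) * S (A k w)}) ?_)
  · simpa using ofReal_one_sub_card_mul_le_prob_iInter hδ.le hmeas hprob
  · intro ω hω kstar hmin
    rw [Set.mem_iInter] at hω
    refine norm_sub_le_of_infDist_le_mul hstab hu (fun k => hA k w) hκ fun k => ?_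
    exact infDist_le_mul_of_sketch_le hsqrt (Real.sqrt_nonneg _) hc (hS _).1 (hS _).2
      (hω kstar).1 (hω k).2 (hmin k)

/-- Randomized multi-space oracle bound (Corollary 4.3). -/
theorem stmt_6
    {U : Type*} [NormedAddCommGroup U] [InnerProductSpace ℝ U] [CompleteSpace U]
    (W : Submodule ℝ U) [CompleteSpace W]
    (M : Set U) (hM : M.Nonempty)
    (δ₀ μ : ℝ) (hδ₀ : 0 ≤ δ₀) (hμ : 0 ≤ μ)
    (hstab : ∀ σ : ℝ, 0 ≤ σ → ∀ w : W, ∀ x y : U,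
      Submodule.orthogonalProjectionOnto W x = w → Submodule.orthogonalProjectionOnto W y = w →
      Metric.infDist x M ≤ σ → Metric.infDist y M ≤ σ →
      ‖x - y‖ ≤ δ₀ + 2 * σ * μ)
    (N : ℕ) (hN : 1 ≤ N)
    (A : Fin N → W → U)
    (hA : ∀ (k : Fin N) (w : W), Submodule.orthogonalProjectionOnto W (A k w) = w)
    (S : U → ℝ) (c C : ℝ) (hc : 0 < c) (hcC : c ≤ C)
    (hS : ∀ v : U, c * Metric.infDist v M ≤ S v ∧ S v ≤ C * Metric.infDist v M)
    (u : U) (hu : u ∈ M)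
    {Ω : Type*} [MeasurableSpace Ω] (ℙ : Measure Ω) [IsProbabilityMeasure ℙ]
    (ε δ : ℝ) (hε0 : 0 ≤ ε) (hε1 : ε < 1) (hδ : 0 < δ)
    (SΘ : Ω → U → ℝ)
    (hmeas : ∀ k : Fin N,
      MeasurableSet {ω : Ω |
        Real.sqrt (1 - ε) * S (A k (Submodule.orthogonalProjectionOnto W u)) ≤
            SΘ ω (A k (Submodule.orthogonalProjectionOnto W u)) ∧
        SΘ ω (A k (Submodule.orthogonalProjectionOnto W u)) ≤
            Real.sqrt (1 + ε) * S (A k (Submodule.orthogonalProjectionOnto W u))})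
    (hprob : ∀ k : Fin N,
      ENNReal.ofReal (1 - δ) ≤
        ℙ {ω : Ω |
          Real.sqrt (1 - ε) * S (A k (Submodule.orthogonalProjectionOnto W u)) ≤
              SΘ ω (A k (Submodule.orthogonalProjectionOnto W u)) ∧
          SΘ ω (A k (Submodule.orthogonalProjectionOnto W u)) ≤
              Real.sqrt (1 + ε) * S (A k (Submodule.orthogonalProjectionOnto W u))}) :
    ENNReal.ofReal (1 - N * δ) ≤
      ℙ {ω : Ω | ∀ kstar : Fin N,
        (∀ k : Fin N, SΘ ω (A kstar (Submodule.orthogonalProjectionOnto W u)) ≤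
            SΘ ω (A k (Submodule.orthogonalProjectionOnto W u))) →
        ‖u - A kstar (Submodule.orthogonalProjectionOnto W u)‖ ≤
          δ₀ + 2 * ((C / c) * Real.sqrt (1 + ε) / Real.sqrt (1 - ε)) * μ *
            ⨅ k : Fin N, ‖u - A k (Submodule.orthogonalProjectionOnto W u)‖} :=
  stmt_6_general W M δ₀ μ hstab N A hA S c C hc hcC hS u hu ℙ ε δ hε1 hδ SΘ hmeas hprob
end

section
/- Let U be a real Hilbert space, W ⊆ U a closed subspace with orthogonal projection P_W, and M ⊆ U a nonempty subset. Let δ₀ ≥ 0 and μ ≥ 0 be constants such that for every σ ≥ 0, every w ∈ W, and all x, y with P_W x = P_W y = w, infDist(x, M) ≤ σ and infDist(y, M) ≤ σ, one has ‖x − y‖ ≤ δ₀ + 2σμ. Let S : U → ℝ satisfy c·infDist(v, M) ≤ S(v) ≤ C·infDist(v, M) for all v ∈ U, with 0 < c ≤ C. Let I be a nonempty index set and, for each i ∈ I, let A_i : W → U satisfy P_W(A_i(w)) = w for all w ∈ W. Fix u ∈ M and set w := P_W u, and suppose i* ∈ I attains the minimum of i ↦ S(A_i(w)) over I, i.e.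 S(A_{i*}(w)) ≤ S(A_i(w)) for all i ∈ I. Then ‖u − A_{i*}(w)‖ ≤ δ₀ + 2(C/c)·μ · inf_{i ∈ I} ‖u − A_i(w)‖. -/
/-!
The surrogate `S` is equivalent to the distance to `M` up to the factor `C / c`, so the
`S`-minimizing reconstruction is at distance at most `(C / c) ‖u - A i w‖` from `M` for every `i`,
while `u ∈ M` itself is at distance `0`. Both `u` and the selected reconstruction lie in the fibre
over `w`, so the stability hypothesis with `σ = (C / c) ⨅ i, ‖u - A i w‖` bounds their distance.
-/

open Metric

theorem infDist_le_div_mul_of_surrogate_le {X : Type*} [PseudoMetricSpace X] {M : Set X}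
    {S : X → ℝ} {c C : ℝ} (hc : 0 < c) {x y : X} (hx : c * infDist x M ≤ S x)
    (hy : S y ≤ C * infDist y M) (hxy : S x ≤ S y) :
    infDist x M ≤ C / c * infDist y M := by
  rw [div_mul_eq_mul_div, le_div_iff₀ hc, mul_comm]
  exact hx.trans (hxy.trans hy)

theorem infDist_le_div_mul_iInf_of_surrogate_min {X ι : Type*} [SeminormedAddCommGroup X]
    [Nonempty ι] {M : Set X} {S : X → ℝ} {c C : ℝ} (hc : 0 < c) (hcC : c ≤ C)
    (hS : ∀ v, c * infDist v M ≤ S v ∧ S v ≤ C * infDist v M) (f : ι → X) {istar : ι}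
    (hmin : ∀ i, S (f istar) ≤ S (f i)) {u : X} (hu : u ∈ M) :
    infDist (f istar) M ≤ C / c * ⨅ i, ‖u - f i‖ := by
  have hCc : 0 ≤ C / c := div_nonneg (hc.le.trans hcC) hc.le
  rw [Real.mul_iInf_of_nonneg hCc]
  refine le_ciInf fun i => ?_
  calc infDist (f istar) M ≤ C / c * infDist (f i) M :=
        infDist_le_div_mul_of_surrogate_le hc (hS _).1 (hS _).2 (hmin i)
    _ ≤ C / c * ‖u - f i‖ := by
        gcongr
        rw [← dist_eq_norm, dist_comm]
        exact infDist_le_dist_of_mem hu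

theorem stmt_7_general
    {U : Type*} [NormedAddCommGroup U] [InnerProductSpace ℝ U]
    (W : Submodule ℝ U) [CompleteSpace W]
    (M : Set U)
    (δ₀ μ : ℝ)
    (hstab : ∀ σ : ℝ, 0 ≤ σ → ∀ w : W, ∀ x y : U,
      Submodule.orthogonalProjectionOnto W x = w → Submodule.orthogonalProjectionOnto W y = w →
      Metric.infDist x M ≤ σ → Metric.infDist y M ≤ σ →
      ‖x - y‖ ≤ δ₀ + 2 * σ * μ)
    (S : U → ℝ) (c C : ℝ) (hc : 0 < c) (hcC : c ≤ C)
    (hS : ∀ v : U, c * Metric.infDist v M ≤ S v ∧ S v ≤ C * Metric.infDist v M)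
    (I : Type*)
    (A : I → W → U)
    (hA : ∀ (i : I) (w : W), Submodule.orthogonalProjectionOnto W (A i w) = w)
    (u : U) (hu : u ∈ M)
    (istar : I)
    (histar : ∀ i : I,
      S (A istar (Submodule.orthogonalProjectionOnto W u)) ≤ S (A i (Submodule.orthogonalProjectionOnto W u))) :
    ‖u - A istar (Submodule.orthogonalProjectionOnto W u)‖ ≤
      δ₀ + 2 * (C / c) * μ * ⨅ i : I, ‖u - A i (Submodule.orthogonalProjectionOnto W u)‖ := by
  have : Nonempty I := ⟨istar⟩
  set w := Submodule.orthogonalProjectionOnto W u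
  set σ := C / c * ⨅ i, ‖u - A i w‖
  have hσ : 0 ≤ σ :=
    mul_nonneg (div_nonneg (hc.le.trans hcC) hc.le) (Real.iInf_nonneg fun _ => norm_nonneg _)
  have hu_dist : infDist u M ≤ σ := by rw [infDist_zero_of_mem hu]; exact hσ
  have hstar_dist : infDist (A istar w) M ≤ σ :=
    infDist_le_div_mul_iInf_of_surrogate_min hc hcC hS (fun i => A i w) histar hu
  calc ‖u - A istar w‖ ≤ δ₀ + 2 * σ * μ :=
        hstab σ hσ w u (A istar w) rfl (hA istar w) hu_dist hstar_dist
    _ = δ₀ + 2 * (C / c) * μ * ⨅ i, ‖u - A i w‖ := by ring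

/-- Oracle bound for the dictionary-based multi-space recovery (Corollary 5.1). -/
theorem stmt_7
    {U : Type*} [NormedAddCommGroup U] [InnerProductSpace ℝ U] [CompleteSpace U]
    (W : Submodule ℝ U) [CompleteSpace W]
    (M : Set U) (hM : M.Nonempty)
    (δ₀ μ : ℝ) (hδ₀ : 0 ≤ δ₀) (hμ : 0 ≤ μ)
    (hstab : ∀ σ : ℝ, 0 ≤ σ → ∀ w : W, ∀ x y : U,
      Submodule.orthogonalProjectionOnto W x = w → Submodule.orthogonalProjectionOnto W y = w →
      Metric.infDist x M ≤ σ → Metric.infDist y M ≤ σ →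
      ‖x - y‖ ≤ δ₀ + 2 * σ * μ)
    (S : U → ℝ) (c C : ℝ) (hc : 0 < c) (hcC : c ≤ C)
    (hS : ∀ v : U, c * Metric.infDist v M ≤ S v ∧ S v ≤ C * Metric.infDist v M)
    (I : Type*) [Nonempty I]
    (A : I → W → U)
    (hA : ∀ (i : I) (w : W), Submodule.orthogonalProjectionOnto W (A i w) = w)
    (u : U) (hu : u ∈ M)
    (istar : I)
    (histar : ∀ i : I,
      S (A istar (Submodule.orthogonalProjectionOnto W u)) ≤ S (A i (Submodule.orthogonalProjectionOnto W u))) :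
    ‖u - A istar (Submodule.orthogonalProjectionOnto W u)‖ ≤
      δ₀ + 2 * (C / c) * μ * ⨅ i : I, ‖u - A i (Submodule.orthogonalProjectionOnto W u)‖ :=
  stmt_7_general W M δ₀ μ hstab S c C hc hcC hS I A hA u hu istar histar
end

section
/- Let H be a real Hilbert space, P a nonempty parameter set, and for each ξ ∈ P let B(ξ) : H →L[ℝ] H be a continuous linear operator and f(ξ) ∈ H, with constants 0 < c ≤ C such that c‖x‖ ≤ ‖B(ξ)x‖ ≤ C‖x‖ for all x ∈ H and all ξ ∈ P. Let u : P → H satisfy B(ξ)u(ξ) = f(ξ) for all ξ, and let M := {u(ξ) : ξ ∈ P}. Fix v ∈ H, let Y ⊆ H be a subspace containing B(ξ)v − f(ξ) for all ξ ∈ P, let Θ : H → ℝ^k be a linear map, and let ε ∈ [0, 1) be such that |‖Θy‖² − ‖y‖²| ≤ ε‖y‖² for all y ∈ Y. Then c·√(1 − ε)·infDist(v, M) ≤ inf_{ξ ∈ P} ‖Θ(B(ξ)v − f(ξ))‖ ≤ C·√(1 + ε)·infDist(v, M). -/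
/-- Sketched residual-based surrogate distance is equivalent to the true distance
to the solution manifold (underlying Corollary 5.2). -/
theorem stmt_9
    {H : Type*} [NormedAddCommGroup H] [InnerProductSpace ℝ H] [CompleteSpace H]
    (P : Type*) [Nonempty P]
    (B : P → (H →L[ℝ] H)) (f : P → H)
    (c C : ℝ) (hc : 0 < c) (hcC : c ≤ C)
    (hbound : ∀ (ξ : P) (x : H), c * ‖x‖ ≤ ‖B ξ x‖ ∧ ‖B ξ x‖ ≤ C * ‖x‖)
    (u : P → H) (hu : ∀ ξ : P, B ξ (u ξ) = f ξ)
    (v : H) (Y : Submodule ℝ H) (hY : ∀ ξ : P, B ξ v - f ξ ∈ Y)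
    (k : ℕ) (Θ : H →ₗ[ℝ] EuclideanSpace ℝ (Fin k))
    (ε : ℝ) (hε0 : 0 ≤ ε) (hε1 : ε < 1)
    (hemb : ∀ y ∈ Y, |‖Θ y‖ ^ 2 - ‖y‖ ^ 2| ≤ ε * ‖y‖ ^ 2) :
    c * Real.sqrt (1 - ε) * Metric.infDist v (Set.range u) ≤
      (⨅ ξ : P, ‖Θ (B ξ v - f ξ)‖) ∧
    (⨅ ξ : P, ‖Θ (B ξ v - f ξ)‖) ≤
      C * Real.sqrt (1 + ε) * Metric.infDist v (Set.range u) := by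
  have h1ε : (0:ℝ) ≤ 1 - ε := by linarith
  have h1ε' : (0:ℝ) ≤ 1 + ε := by linarith
  have hC : 0 < C := lt_of_lt_of_le hc hcC
  have hres : ∀ ξ : P, B ξ v - f ξ = B ξ (v - u ξ) := fun ξ => by
    rw [map_sub, hu]
  -- sketch lower bound
  have hΘlo : ∀ ξ : P, Real.sqrt (1 - ε) * ‖B ξ v - f ξ‖ ≤ ‖Θ (B ξ v - f ξ)‖ := by
    intro ξ
    have h := abs_le.1 (hemb _ (hY ξ))
    have h2 : (1 - ε) * ‖B ξ v - f ξ‖ ^ 2 ≤ ‖Θ (B ξ v - f ξ)‖ ^ 2 := by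
      nlinarith [h.1, h.2]
    calc Real.sqrt (1-ε) * ‖B ξ v - f ξ‖
        = Real.sqrt ((1-ε) * ‖B ξ v - f ξ‖^2) := by
          rw [Real.sqrt_mul h1ε, Real.sqrt_sq (norm_nonneg _)]
      _ ≤ Real.sqrt (‖Θ (B ξ v - f ξ)‖^2) := Real.sqrt_le_sqrt h2
      _ = ‖Θ (B ξ v - f ξ)‖ := Real.sqrt_sq (norm_nonneg _)
  have hΘhi : ∀ ξ : P, ‖Θ (B ξ v - f ξ)‖ ≤ Real.sqrt (1 + ε) * ‖B ξ v - f ξ‖ := by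
    intro ξ
    have h := abs_le.1 (hemb _ (hY ξ))
    have h2 : ‖Θ (B ξ v - f ξ)‖ ^ 2 ≤ (1 + ε) * ‖B ξ v - f ξ‖ ^ 2 := by
      nlinarith [h.1, h.2]
    calc ‖Θ (B ξ v - f ξ)‖ = Real.sqrt (‖Θ (B ξ v - f ξ)‖^2) :=
          (Real.sqrt_sq (norm_nonneg _)).symm
      _ ≤ Real.sqrt ((1+ε) * ‖B ξ v - f ξ‖^2) := Real.sqrt_le_sqrt h2
      _ = Real.sqrt (1+ε) * ‖B ξ v - f ξ‖ := by
          rw [Real.sqrt_mul h1ε', Real.sqrt_sq (norm_nonneg _)]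
  have hbdd : BddBelow (Set.range fun ξ : P => ‖Θ (B ξ v - f ξ)‖) :=
    ⟨0, by rintro x ⟨ξ, rfl⟩; exact norm_nonneg _⟩
  constructor
  · apply le_ciInf
    intro ξ
    have hd : Metric.infDist v (Set.range u) ≤ ‖v - u ξ‖ := by
      simpa [dist_eq_norm] using
        Metric.infDist_le_dist_of_mem (Set.mem_range_self (f := u) ξ)
    have hb := (hbound ξ (v - u ξ)).1
    calc c * Real.sqrt (1 - ε) * Metric.infDist v (Set.range u)
        ≤ c * Real.sqrt (1 - ε) * ‖v - u ξ‖ := by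
          apply mul_le_mul_of_nonneg_left hd
          positivity
      _ = Real.sqrt (1 - ε) * (c * ‖v - u ξ‖) := by ring
      _ ≤ Real.sqrt (1 - ε) * ‖B ξ (v - u ξ)‖ :=
          mul_le_mul_of_nonneg_left hb (Real.sqrt_nonneg _)
      _ = Real.sqrt (1 - ε) * ‖B ξ v - f ξ‖ := by rw [hres ξ]
      _ ≤ ‖Θ (B ξ v - f ξ)‖ := hΘlo ξ
  · have hK : 0 < C * Real.sqrt (1 + ε) := by
      have : (0:ℝ) < Real.sqrt (1 + ε) := Real.sqrt_pos.2 (by linarith)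
      positivity
    apply le_of_forall_pos_le_add
    intro δ hδ
    set d := Metric.infDist v (Set.range u) with hdset
    have hlt : d < d + δ / (C * Real.sqrt (1 + ε)) := by
      have : 0 < δ / (C * Real.sqrt (1 + ε)) := div_pos hδ hK
      linarith
    obtain ⟨y, ⟨ξ, rfl⟩, hy⟩ :=
      (Metric.infDist_lt_iff (Set.range_nonempty u)).1 hlt
    have hdist : ‖v - u ξ‖ < d + δ / (C * Real.sqrt (1 + ε)) := by
      simpa [dist_eq_norm] using hy
    calc (⨅ ξ : P, ‖Θ (B ξ v - f ξ)‖) ≤ ‖Θ (B ξ v - f ξ)‖ := ciInf_le hbdd ξ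
      _ ≤ Real.sqrt (1 + ε) * ‖B ξ v - f ξ‖ := hΘhi ξ
      _ = Real.sqrt (1 + ε) * ‖B ξ (v - u ξ)‖ := by rw [hres ξ]
      _ ≤ Real.sqrt (1 + ε) * (C * ‖v - u ξ‖) :=
          mul_le_mul_of_nonneg_left (hbound ξ (v - u ξ)).2 (Real.sqrt_nonneg _)
      _ = C * Real.sqrt (1 + ε) * ‖v - u ξ‖ := by ring
      _ ≤ C * Real.sqrt (1 + ε) * (d + δ / (C * Real.sqrt (1 + ε))) :=
          mul_le_mul_of_nonneg_left hdist.le hK.le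
      _ = C * Real.sqrt (1 + ε) * d + δ := by
          field_simp
end

section
/- Let U be a real Hilbert space, W ⊆ U a finite-dimensional subspace with orthogonal projection P_W, V ⊆ U a finite-dimensional subspace with V ∩ W^⊥ = {0}, and ε ≥ 0. Let K := {v ∈ U : infDist(v, V) ≤ ε}. Let A* : W → U be a map such that for every w ∈ W there exists v_w ∈ V with ‖w − P_W v_w‖ ≤ ‖w − P_W v‖ for all v ∈ V and A*(w) = v_w + (w − P_W v_w). Then for every map A : W → U and every r ≥ 0: if ‖u − A(P_W u)‖ ≤ r for all u ∈ K, then ‖u − A*(P_W u)‖ ≤ r for all u ∈ K. -/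
/-!
Write `w = P_W u` and let `v_w` be the least-squares fit, so that `A*(w) = v_w + η` with
`η = w - P_W v_w ∈ W`. The first-order condition of the fit makes `η` orthogonal to `V`, and then
`⟪η, u - v⟫ = ‖η‖²` for every `v ∈ V`. Consequently the point reflection `u'` of `u` through
`A*(w)` satisfies `‖u' - (2 v_w - v)‖ = ‖u - v‖`, so `u'` stays in the cylinder, and
`P_W u' = P_W u`. Any map `A` must recover both `u` and `u'` from the same datum `w`; since `A*(w)`
is their midpoint, the triangle inequality gives `‖u - A*(w)‖ ≤ r` as soon as `A` achieves `r`.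
-/

open scoped RealInnerProductSpace

section PointReflection

variable {V P : Type*} [SeminormedAddCommGroup V] [NormedSpace ℝ V] [PseudoMetricSpace P]
  [NormedAddTorsor V P]

theorem dist_le_of_dist_pointReflection_le {u c a : P} {r : ℝ} (hu : dist u a ≤ r)
    (hu' : dist (AffineIsometryEquiv.pointReflection ℝ c u) a ≤ r) : dist u c ≤ r := by
  have := dist_triangle (AffineIsometryEquiv.pointReflection ℝ c u) a u
  rw [AffineIsometryEquiv.dist_pointReflection_self_real, dist_comm a u] at this
  rw [dist_comm]
  linarith

theorem ContinuousLinearMap.map_pointReflection {F : Type*} [SeminormedAddCommGroup F]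
    [NormedSpace ℝ F] (f : V →L[ℝ] F) (c u : V) :
    f (AffineIsometryEquiv.pointReflection ℝ c u) =
      AffineIsometryEquiv.pointReflection ℝ (f c) (f u) := by
  simp only [AffineIsometryEquiv.pointReflection_apply, vsub_eq_sub, vadd_eq_add, map_add,
    map_sub]

end PointReflection

section InnerProductSpace

variable {E : Type*} [NormedAddCommGroup E] [InnerProductSpace ℝ E]

theorem norm_two_smul_sub_eq_of_inner_eq {η x : E} (h : ⟪η, x⟫ = ‖η‖ ^ 2) :
    ‖(2 : ℝ) • η - x‖ = ‖x‖ := by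
  refine (sq_eq_sq₀ (norm_nonneg _) (norm_nonneg _)).1 ?_
  rw [norm_sub_sq_real, real_inner_smul_left, h, norm_smul, Real.norm_two]
  ring

namespace Submodule

theorem inner_sub_eq_zero_of_forall_norm_sub_le (K : Submodule ℝ E) {x p : E}
    (hp : p ∈ K) (hmin : ∀ q ∈ K, ‖x - p‖ ≤ ‖x - q‖) : ∀ q ∈ K, ⟪x - p, q⟫ = 0 := by
  rw [← norm_eq_iInf_iff_real_inner_eq_zero K hp]
  have hbdd : BddBelow (Set.range fun q : (K : Set E) ↦ ‖x - q‖) :=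
    ⟨0, Set.forall_mem_range.2 fun _ ↦ norm_nonneg _⟩
  exact le_antisymm (le_ciInf fun q ↦ hmin q q.2) (ciInf_le hbdd ⟨p, hp⟩)

theorem infDist_pointReflection_le (V : Submodule ℝ E) {p η u : E} (hp : p ∈ V)
    (hη : ∀ v ∈ V, ⟪η, v⟫ = 0) (hu : ⟪η, u - p⟫ = ‖η‖ ^ 2) :
    Metric.infDist (AffineIsometryEquiv.pointReflection ℝ (p + η) u) V ≤
      Metric.infDist u V := by
  refine (Metric.le_infDist (Set.nonempty_of_mem V.zero_mem)).2 fun v hv ↦ ?_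
  have hv' : (2 : ℝ) • p - v ∈ V := V.sub_mem (V.smul_mem 2 hp) hv
  have huv : ⟪η, u - v⟫ = ‖η‖ ^ 2 := by
    rw [← sub_add_sub_cancel u p v, inner_add_right, hu, hη _ (V.sub_mem hp hv), add_zero]
  calc Metric.infDist (AffineIsometryEquiv.pointReflection ℝ (p + η) u) V
      ≤ dist (AffineIsometryEquiv.pointReflection ℝ (p + η) u) ((2 : ℝ) • p - v) :=
        Metric.infDist_le_dist_of_mem hv'
    _ = ‖(2 : ℝ) • η - (u - v)‖ := by
        rw [AffineIsometryEquiv.pointReflection_apply, dist_eq_norm, vsub_eq_sub, vadd_eq_add]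
        congr 1
        module
    _ = dist u v := by rw [norm_two_smul_sub_eq_of_inner_eq huv, dist_eq_norm]

variable (W : Submodule ℝ E) [W.HasOrthogonalProjection]

theorem inner_starProjection_eq_of_mem_left {η : E} (hη : η ∈ W) (x : E) :
    ⟪η, W.starProjection x⟫ = ⟪η, x⟫ := by
  rw [← inner_starProjection_left_eq_right, W.starProjection_eq_self_iff.2 hη]

theorem inner_sub_starProjection_eq_zero_of_forall_norm_le (V : Submodule ℝ E) {w p : E}
    (hw : w ∈ W) (hp : p ∈ V)
    (hmin : ∀ v ∈ V, ‖w - W.starProjection p‖ ≤ ‖w - W.starProjection v‖) :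
    ∀ v ∈ V, ⟪w - W.starProjection p, v⟫ = 0 := by
  have hS := (V.map (W.starProjection : E →ₗ[ℝ] E)).inner_sub_eq_zero_of_forall_norm_sub_le
    (mem_map_of_mem hp) (by rintro - ⟨v, hv, rfl⟩; exact hmin v hv)
  intro v hv
  rw [← W.inner_starProjection_eq_of_mem_left (W.sub_mem hw (W.starProjection_apply_mem p))]
  exact hS _ (mem_map_of_mem hv)

end Submodule

end InnerProductSpace

theorem stmt_12_general
    {U : Type*} [NormedAddCommGroup U] [InnerProductSpace ℝ U]
    (W : Submodule ℝ U) [FiniteDimensional ℝ W]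
    (V : Submodule ℝ U)
    (ε : ℝ)
    (Astar : W → U)
    (hAstar : ∀ w : W, ∃ vw ∈ V,
      (∀ v ∈ V, ‖(w : U) - (W.orthogonalProjection vw : U)‖ ≤
        ‖(w : U) - (W.orthogonalProjection v : U)‖) ∧
      Astar w = vw + ((w : U) - (W.orthogonalProjection vw : U)))
    (A : W → U) (r : ℝ)
    (h : ∀ u : U, Metric.infDist u (V : Set U) ≤ ε →
      ‖u - A (W.orthogonalProjection u)‖ ≤ r) :
    ∀ u : U, Metric.infDist u (V : Set U) ≤ ε →
      ‖u - Astar (W.orthogonalProjection u)‖ ≤ r := by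
  intro u hu
  obtain ⟨p, hp, hmin, hAp⟩ := hAstar (W.orthogonalProjectionOnto u)
  set η : U := (W.orthogonalProjectionOnto u : U) - W.orthogonalProjectionOnto p
  have hηW : η ∈ W := W.sub_mem (Subtype.mem _) (Subtype.mem _)
  have hηV : ∀ v ∈ V, ⟪η, v⟫ = 0 :=
    W.inner_sub_starProjection_eq_zero_of_forall_norm_le V (Subtype.mem _) hp hmin
  have hηu : ⟪η, u - p⟫ = ‖η‖ ^ 2 := by
    rw [inner_sub_right, ← W.inner_starProjection_eq_of_mem_left hηW u,
      ← W.inner_starProjection_eq_of_mem_left hηW p, ← inner_sub_right]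
    exact real_inner_self_eq_norm_sq η
  set u' := AffineIsometryEquiv.pointReflection ℝ (p + η) u
  have hPu' : W.orthogonalProjectionOnto u' = W.orthogonalProjectionOnto u := by
    have hc : W.starProjection p + η = W.starProjection u := add_sub_cancel _ _
    refine Subtype.ext ?_
    change W.starProjection u' = W.starProjection u
    rw [W.starProjection.map_pointReflection, map_add, W.starProjection_eq_self_iff.2 hηW, hc,
      AffineIsometryEquiv.pointReflection_self]
  have hu_err := h u hu
  have hu'_err := h u' ((V.infDist_pointReflection_le hp hηV hηu).trans hu)
  rw [hPu'] at hu'_err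
  rw [← dist_eq_norm] at hu_err hu'_err ⊢
  rw [hAp]
  exact dist_le_of_dist_pointReflection_le hu_err hu'_err

/-- Worst-case optimality of the PBDW recovery map over the cylinder
`K = {v : dist(v, V) ≤ ε}` (Theorem 2.8 of Binev et al.). -/
theorem stmt_12
    {U : Type*} [NormedAddCommGroup U] [InnerProductSpace ℝ U] [CompleteSpace U]
    (W : Submodule ℝ U) [FiniteDimensional ℝ W]
    (V : Submodule ℝ U) [FiniteDimensional ℝ V]
    (hVW : V ⊓ Wᗮ = ⊥)
    (ε : ℝ) (hε : 0 ≤ ε)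
    (Astar : W → U)
    (hAstar : ∀ w : W, ∃ vw ∈ V,
      (∀ v ∈ V, ‖(w : U) - (W.orthogonalProjection vw : U)‖ ≤
        ‖(w : U) - (W.orthogonalProjection v : U)‖) ∧
      Astar w = vw + ((w : U) - (W.orthogonalProjection vw : U)))
    (A : W → U) (r : ℝ) (hr : 0 ≤ r)
    (h : ∀ u : U, Metric.infDist u (V : Set U) ≤ ε →
      ‖u - A (W.orthogonalProjection u)‖ ≤ r) :
    ∀ u : U, Metric.infDist u (V : Set U) ≤ ε →
      ‖u - Astar (W.orthogonalProjection u)‖ ≤ r :=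
  stmt_12_general W V ε Astar hAstar A r h
end

section
/- Let U be a real Hilbert space, W ⊆ U a closed subspace with orthogonal projection P_W and W^⊥ ≠ {0}, and V ⊆ U a nonzero finite-dimensional subspace with orthogonal projection P_V, such that V ∩ W^⊥ = {0}. Define β := inf{‖P_W v‖ : v ∈ V, ‖v‖ = 1}. Then β > 0, and sup{‖η‖ / ‖η − P_V η‖ : η ∈ W^⊥, η ≠ 0} = 1/β. -/
/-!
By compactness of the unit sphere of `V`, the infimum `β` is attained at some unit `v₀ ∈ V`, and
`β > 0` because `V ∩ Wᗮ = 0`. For `η ∈ Wᗮ` and `v ∈ V` we have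
`⟪η, v⟫ = ⟪η, v - P_W v⟫ ≤ √(1 - β²) ‖η‖ ‖v‖`, i.e. the angle between `η` and `V` has sine at
least `β`, so `‖η - P_V η‖ ≥ β ‖η‖` and every quotient is at most `1 / β`. The bound is attained
at `η = v₀ - P_W v₀`, whose distance to `(1 - β²) v₀ ∈ V` is exactly `β ‖η‖`; when `β = 1` this `η`
vanishes, but then any nonzero `η ∈ Wᗮ` has quotient at least `1`.
-/

open scoped RealInnerProductSpace

section

variable {E : Type*} [NormedAddCommGroup E] [InnerProductSpace ℝ E]

theorem one_sub_sq_mul_norm_sq_le_norm_sub_sq_of_inner_le {x y : E} {c : ℝ}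
    (h : ⟪x, y⟫ ≤ c * (‖x‖ * ‖y‖)) : (1 - c ^ 2) * ‖x‖ ^ 2 ≤ ‖x - y‖ ^ 2 := by
  rw [norm_sub_sq_real]
  nlinarith [sq_nonneg (‖y‖ - c * ‖x‖)]

namespace Submodule

theorem norm_sub_starProjection_le_norm_sub {V : Submodule ℝ E} [V.HasOrthogonalProjection]
    (y : E) {m : E} (hm : m ∈ V) : ‖y - V.starProjection y‖ ≤ ‖y - m‖ := by
  rw [starProjection_minimal]
  exact ciInf_le ⟨0, by rintro _ ⟨x, rfl⟩; positivity⟩ (⟨m, hm⟩ : V)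

variable (W : Submodule ℝ E) [W.HasOrthogonalProjection]

theorem norm_sq_eq_norm_starProjection_sq_add_norm_sub_sq (v : E) :
    ‖v‖ ^ 2 = ‖W.starProjection v‖ ^ 2 + ‖v - W.starProjection v‖ ^ 2 := by
  simpa [starProjection_orthogonal'] using W.norm_sq_eq_add_norm_sq_starProjection v

theorem real_inner_starProjection_right (v : E) :
    ⟪v, W.starProjection v⟫ = ‖W.starProjection v‖ ^ 2 := by
  have h := W.starProjection_inner_eq_zero v (W.starProjection v) (W.starProjection_apply_mem v)
  rw [inner_sub_left, real_inner_self_eq_norm_sq, sub_eq_zero] at h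
  exact h

theorem norm_sub_starProjection_le_sqrt_mul {β : ℝ} (hβ₀ : 0 ≤ β) (hβ₁ : β ≤ 1) {v : E}
    (hv : β * ‖v‖ ≤ ‖W.starProjection v‖) :
    ‖v - W.starProjection v‖ ≤ √(1 - β ^ 2) * ‖v‖ := by
  have hβv : (β * ‖v‖) ^ 2 ≤ ‖W.starProjection v‖ ^ 2 := by gcongr
  have hβ₁' : 0 ≤ 1 - β ^ 2 := by nlinarith
  rw [← Real.sqrt_sq (norm_nonneg v), ← Real.sqrt_mul hβ₁',
    Real.le_sqrt (norm_nonneg _) (by positivity)]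
  nlinarith [W.norm_sq_eq_norm_starProjection_sq_add_norm_sub_sq v]

theorem mul_norm_le_norm_sub_of_mem_orthogonal {β : ℝ} (hβ₀ : 0 ≤ β) (hβ₁ : β ≤ 1) {v : E}
    (hv : β * ‖v‖ ≤ ‖W.starProjection v‖) {η : E} (hη : η ∈ Wᗮ) :
    β * ‖η‖ ≤ ‖η - v‖ := by
  have hinner : ⟪η, v⟫ ≤ √(1 - β ^ 2) * (‖η‖ * ‖v‖) :=
    calc ⟪η, v⟫ = ⟪η, v - W.starProjection v⟫ := by
          rw [inner_sub_right, inner_left_of_mem_orthogonal (W.starProjection_apply_mem v) hη,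
            sub_zero]
      _ ≤ ‖η‖ * ‖v - W.starProjection v‖ := real_inner_le_norm _ _
      _ ≤ ‖η‖ * (√(1 - β ^ 2) * ‖v‖) := by
          gcongr; exact W.norm_sub_starProjection_le_sqrt_mul hβ₀ hβ₁ hv
      _ = √(1 - β ^ 2) * (‖η‖ * ‖v‖) := by ring
  have hsq := one_sub_sq_mul_norm_sq_le_norm_sub_sq_of_inner_le hinner
  rw [Real.sq_sqrt (by nlinarith), sub_sub_cancel, ← mul_pow] at hsq
  exact (pow_le_pow_iff_left₀ (by positivity) (norm_nonneg _) two_ne_zero).1 hsq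

theorem norm_sub_starProjection_sub_smul_eq {v : E} (hv : ‖v‖ = 1) :
    ‖v - W.starProjection v - (1 - ‖W.starProjection v‖ ^ 2) • v‖ =
      ‖W.starProjection v‖ * ‖v - W.starProjection v‖ := by
  have hpyth := W.norm_sq_eq_norm_starProjection_sq_add_norm_sub_sq v
  refine (pow_left_inj₀ (norm_nonneg _) (by positivity) two_ne_zero).1 ?_
  rw [show v - W.starProjection v - (1 - ‖W.starProjection v‖ ^ 2) • v =
      ‖W.starProjection v‖ ^ 2 • v - W.starProjection v by module,
    norm_sub_sq_real, real_inner_smul_left, real_inner_starProjection_right, norm_smul,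
    Real.norm_of_nonneg (by positivity), hv, mul_pow]
  rw [hv] at hpyth
  nlinarith

theorem exists_mem_orthogonal_norm_sub_starProjection_le (hW : Wᗮ ≠ ⊥) {V : Submodule ℝ E}
    [V.HasOrthogonalProjection] {v₀ : E} (hv₀V : v₀ ∈ V) (hv₀ : ‖v₀‖ = 1) :
    ∃ η ∈ Wᗮ, η ≠ 0 ∧ ‖η - V.starProjection η‖ ≤ ‖W.starProjection v₀‖ * ‖η‖ := by
  rcases (W.norm_starProjection_apply_le v₀).lt_or_eq with hlt | heq
  · refine ⟨v₀ - W.starProjection v₀, W.sub_starProjection_mem_orthogonal v₀, ?_, ?_⟩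
    · intro h
      rw [sub_eq_zero] at h
      exact hlt.ne (congrArg norm h.symm)
    · calc _ ≤ ‖v₀ - W.starProjection v₀ - (1 - ‖W.starProjection v₀‖ ^ 2) • v₀‖ :=
            norm_sub_starProjection_le_norm_sub _ (V.smul_mem _ hv₀V)
        _ = _ := W.norm_sub_starProjection_sub_smul_eq hv₀
  · obtain ⟨η, hη, hη0⟩ := exists_mem_ne_zero_of_ne_bot hW
    refine ⟨η, hη, hη0, ?_⟩
    rw [heq, hv₀, one_mul]
    simpa using norm_sub_starProjection_le_norm_sub η V.zero_mem

theorem exists_isLeast_norm_starProjection {V : Submodule ℝ E} [FiniteDimensional ℝ V]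
    (hV : V ≠ ⊥) :
    ∃ v₀ ∈ V, ‖v₀‖ = 1 ∧
      IsLeast {x : ℝ | ∃ v : E, v ∈ V ∧ ‖v‖ = 1 ∧ x = ‖W.starProjection v‖}
        ‖W.starProjection v₀‖ := by
  have : Nontrivial V := nontrivial_iff_ne_bot.2 hV
  have hcont : Continuous fun u : V => ‖W.starProjection (u : E)‖ := by fun_prop
  obtain ⟨u₀, hu₀, hmin⟩ := (isCompact_sphere (0 : V) 1).exists_isMinOn
    (NormedSpace.sphere_nonempty.2 zero_le_one) hcont.continuousOn
  rw [mem_sphere_zero_iff_norm] at hu₀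
  refine ⟨u₀, u₀.2, hu₀, ⟨u₀, u₀.2, hu₀, rfl⟩, ?_⟩
  rintro _ ⟨v, hvV, hv, rfl⟩
  exact hmin (show (⟨v, hvV⟩ : V) ∈ Metric.sphere 0 1 by simpa using hv)

theorem mul_norm_le_norm_starProjection {V : Submodule ℝ E} {β : ℝ}
    (hβ : β ∈ lowerBounds {x : ℝ | ∃ v : E, v ∈ V ∧ ‖v‖ = 1 ∧ x = ‖W.starProjection v‖})
    {v : E} (hv : v ∈ V) : β * ‖v‖ ≤ ‖W.starProjection v‖ := by
  rcases eq_or_ne v 0 with rfl | hv0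
  · simp
  have hvpos : 0 < ‖v‖ := norm_pos_iff.2 hv0
  have hunit := hβ ⟨‖v‖⁻¹ • v, V.smul_mem _ hv, by simp [norm_smul, hvpos.ne'], rfl⟩
  rw [map_smul, norm_smul, norm_inv, norm_norm, inv_mul_eq_div, le_div_iff₀ hvpos] at hunit
  exact hunit

theorem isGreatest_norm_div_norm_sub_starProjection {V : Submodule ℝ E}
    [V.HasOrthogonalProjection] {β : ℝ} (hβ₀ : 0 < β) (hβ₁ : β ≤ 1)
    (hβ : ∀ v ∈ V, β * ‖v‖ ≤ ‖W.starProjection v‖)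
    (hwit : ∃ η ∈ Wᗮ, η ≠ 0 ∧ ‖η - V.starProjection η‖ ≤ β * ‖η‖) :
    IsGreatest {x : ℝ | ∃ η : E, η ∈ Wᗮ ∧ η ≠ 0 ∧ x = ‖η‖ / ‖η - V.starProjection η‖}
      (1 / β) := by
  have hlower : ∀ η ∈ Wᗮ, β * ‖η‖ ≤ ‖η - V.starProjection η‖ := fun η hη =>
    W.mul_norm_le_norm_sub_of_mem_orthogonal hβ₀.le hβ₁ (hβ _ (V.starProjection_apply_mem η)) hη
  have hpos : ∀ η ∈ Wᗮ, η ≠ 0 → 0 < ‖η - V.starProjection η‖ := fun η hη hη0 =>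
    (mul_pos hβ₀ (norm_pos_iff.2 hη0)).trans_le (hlower η hη)
  obtain ⟨η, hη, hη0, hle⟩ := hwit
  refine ⟨⟨η, hη, hη0, ?_⟩, ?_⟩
  · rw [div_eq_div_iff hβ₀.ne' (hpos η hη hη0).ne']
    linarith [hlower η hη]
  · rintro _ ⟨ξ, hξ, hξ0, rfl⟩
    rw [div_le_div_iff₀ (hpos ξ hξ hξ0) hβ₀]
    linarith [hlower ξ hξ]

end Submodule

end

theorem stmt_13_general
    {U : Type*} [NormedAddCommGroup U] [InnerProductSpace ℝ U]
    (W : Submodule ℝ U) [CompleteSpace W] (hW : Wᗮ ≠ ⊥)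
    (V : Submodule ℝ U) [FiniteDimensional ℝ V] (hV : V ≠ ⊥)
    (hVW : V ⊓ Wᗮ = ⊥) :
    0 < sInf {x : ℝ | ∃ v : U, v ∈ V ∧ ‖v‖ = 1 ∧
        x = ‖(W.orthogonalProjection v : U)‖} ∧
    sSup {x : ℝ | ∃ η : U, η ∈ Wᗮ ∧ η ≠ 0 ∧
        x = ‖η‖ / ‖η - (V.orthogonalProjection η : U)‖} =
      1 / sInf {x : ℝ | ∃ v : U, v ∈ V ∧ ‖v‖ = 1 ∧
        x = ‖(W.orthogonalProjection v : U)‖} := by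
  simp only [Submodule.coe_orthogonalProjectionOnto_apply]
  obtain ⟨v₀, hv₀V, hv₀, hleast⟩ := W.exists_isLeast_norm_starProjection hV
  rw [hleast.csInf_eq]
  have hβ₀ : 0 < ‖W.starProjection v₀‖ := by
    refine norm_pos_iff.2 fun h => ?_
    have hv₀W : v₀ ∈ V ⊓ Wᗮ := ⟨hv₀V, W.starProjection_apply_eq_zero_iff.1 h⟩
    rw [hVW, Submodule.mem_bot] at hv₀W
    simp [hv₀W] at hv₀
  have hβ₁ : ‖W.starProjection v₀‖ ≤ 1 := hv₀ ▸ W.norm_starProjection_apply_le v₀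
  refine ⟨hβ₀, (W.isGreatest_norm_div_norm_sub_starProjection hβ₀ hβ₁
    (fun _ => W.mul_norm_le_norm_starProjection hleast.2)
    (W.exists_mem_orthogonal_norm_sub_starProjection_le hW hv₀V hv₀)).csSup_eq⟩

/-- Identity between the stability constants of the one-space (PBDW) problem
(equation (6) of the paper): μ(V, W) = 1 / β(V, W). -/
theorem stmt_13
    {U : Type*} [NormedAddCommGroup U] [InnerProductSpace ℝ U] [CompleteSpace U]
    (W : Submodule ℝ U) [CompleteSpace W] (hW : Wᗮ ≠ ⊥)
    (V : Submodule ℝ U) [FiniteDimensional ℝ V] (hV : V ≠ ⊥)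
    (hVW : V ⊓ Wᗮ = ⊥) :
    0 < sInf {x : ℝ | ∃ v : U, v ∈ V ∧ ‖v‖ = 1 ∧
        x = ‖(W.orthogonalProjection v : U)‖} ∧
    sSup {x : ℝ | ∃ η : U, η ∈ Wᗮ ∧ η ≠ 0 ∧
        x = ‖η‖ / ‖η - (V.orthogonalProjection η : U)‖} =
      1 / sInf {x : ℝ | ∃ v : U, v ∈ V ∧ ‖v‖ = 1 ∧
        x = ‖(W.orthogonalProjection v : U)‖} :=
  stmt_13_general W hW V hV hVW
end

section
/- Let U be a real Hilbert space, W ⊆ U a closed subspace with orthogonal projection P_W, and V ⊆ U a finite-dimensional subspace. Then the following are equivalent: (i) for every w ∈ W there exists a unique v* ∈ V such that ‖w − P_W v*‖ ≤ ‖w − P_W v‖ for all v ∈ V; (ii) V ∩ W^⊥ = {0}. -/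
/-!
Minimizing `‖w - P_W v‖` over `v ∈ V` means projecting `w` onto the finite-dimensional, hence
closed, subspace `P_W(V)`: the minimizers are exactly the `v ∈ V` with `P_W v` equal to that
projection. So a minimizer always exists, and it is unique iff `P_W` is injective on `V`, i.e.
iff `V ∩ ker P_W = V ∩ Wᗮ = {0}`.
-/

open Submodule

section

variable {𝕜 E F : Type*} [RCLike 𝕜] [NormedAddCommGroup F] [InnerProductSpace 𝕜 F]

theorem Submodule.isMinOn_norm_sub_iff (K : Submodule 𝕜 F) [K.HasOrthogonalProjection]
    {y z : F} (hz : z ∈ K) :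
    IsMinOn (fun k => ‖y - k‖) K z ↔ K.starProjection y = z := by
  refine ⟨fun hmin => ?_, ?_⟩
  · have hinf : ‖y - z‖ = ⨅ k : K, ‖y - k‖ := (hmin.iInf_eq hz).symm
    exact eq_starProjection_of_mem_of_inner_eq_zero hz
      ((K.norm_eq_iInf_iff_inner_eq_zero hz).1 hinf)
  · rintro rfl k hk
    show ‖y - K.starProjection y‖ ≤ ‖y - k‖
    rw [starProjection_minimal]
    exact ciInf_le ⟨0, Set.forall_mem_range.2 fun _ => norm_nonneg _⟩ (⟨k, hk⟩ : K)

variable [AddCommGroup E] [Module 𝕜 E] (T : E →ₗ[𝕜] F) (V : Submodule 𝕜 E)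

theorem LinearMap.isMinOn_norm_sub_iff [(V.map T).HasOrthogonalProjection] {y : F} {v : E}
    (hv : v ∈ V) :
    IsMinOn (fun v => ‖y - T v‖) V v ↔ (V.map T).starProjection y = T v := by
  rw [← (V.map T).isMinOn_norm_sub_iff (mem_map_of_mem hv), isMinOn_iff, isMinOn_iff,
    map_coe, Set.forall_mem_image]

theorem LinearMap.existsUnique_isMinOn_norm_sub [(V.map T).HasOrthogonalProjection]
    (hV : V ⊓ LinearMap.ker T = ⊥) (y : F) :
    ∃! v, v ∈ V ∧ IsMinOn (fun v => ‖y - T v‖) V v := by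
  obtain ⟨v₀, hv₀, hTv₀⟩ := (V.map T).starProjection_apply_mem y
  refine ⟨v₀, ⟨hv₀, (T.isMinOn_norm_sub_iff V hv₀).2 hTv₀.symm⟩, ?_⟩
  rintro v ⟨hv, hmin⟩
  have hker : v - v₀ ∈ V ⊓ LinearMap.ker T :=
    ⟨sub_mem hv hv₀, by simp [← (T.isMinOn_norm_sub_iff V hv).1 hmin, hTv₀]⟩
  simpa [hV, sub_eq_zero] using hker

end

theorem LinearMap.inf_ker_eq_bot_of_existsUnique_isMinOn {R E F : Type*} [Ring R]
    [AddCommGroup E] [Module R E] [SeminormedAddCommGroup F] [Module R F] (T : E →ₗ[R] F)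
    (V : Submodule R E) (y : F) (h : ∃! v, v ∈ V ∧ IsMinOn (fun v => ‖y - T v‖) V v) :
    V ⊓ LinearMap.ker T = ⊥ := by
  obtain ⟨v₀, ⟨hv₀, hmin⟩, huniq⟩ := h
  rw [eq_bot_iff]
  rintro x ⟨hx, hTx : T x = 0⟩
  have hshift : v₀ + x = v₀ := huniq _ ⟨add_mem hv₀ hx, fun v hv => by simpa [hTx] using hmin hv⟩
  simpa using hshift

theorem stmt_14_general
    {U : Type*} [NormedAddCommGroup U] [InnerProductSpace ℝ U]
    (W : Submodule ℝ U) [CompleteSpace W]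
    (V : Submodule ℝ U) [FiniteDimensional ℝ V] :
    (∀ w : W, ∃! vstar : U, vstar ∈ V ∧
      ∀ v ∈ V, ‖(w : U) - (Submodule.orthogonalProjection W vstar : U)‖ ≤
        ‖(w : U) - (Submodule.orthogonalProjection W v : U)‖) ↔
    V ⊓ Wᗮ = ⊥ := by
  let P : U →ₗ[ℝ] U := W.starProjection
  show (∀ w : W, ∃! vstar, vstar ∈ V ∧ IsMinOn (fun v => ‖(w : U) - P v‖) V vstar) ↔ _
  rw [← W.ker_starProjection]
  exact ⟨fun h => P.inf_ker_eq_bot_of_existsUnique_isMinOn V 0 (h 0),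
    fun h w => P.existsUnique_isMinOn_norm_sub V h w⟩

/-- Well-posedness criterion for the PBDW variational problem: the least-squares
background term exists and is unique for every observation iff `V ∩ W^⊥ = {0}`. -/
theorem stmt_14
    {U : Type*} [NormedAddCommGroup U] [InnerProductSpace ℝ U] [CompleteSpace U]
    (W : Submodule ℝ U) [CompleteSpace W]
    (V : Submodule ℝ U) [FiniteDimensional ℝ V] :
    (∀ w : W, ∃! vstar : U, vstar ∈ V ∧
      ∀ v ∈ V, ‖(w : U) - (Submodule.orthogonalProjection W vstar : U)‖ ≤
        ‖(w : U) - (Submodule.orthogonalProjection W v : U)‖) ↔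
    V ⊓ Wᗮ = ⊥ :=
  stmt_14_general W V
end
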